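/- arXiv:2503.10449 — 5 statements merged into one kernel-verified Lean document; each statement's English description precedes it below -/
import Mathlib

section
/- For a C-pseudo-cone K, the support function satisfies h_K(u) = sup_{v ∈ Ω_C} ⟨u,v⟩ ρ_K(v) for all u ∈ Ω_{C°}, where h_K(u) = sup_{y ∈ K} ⟨u,y⟩. -/
open Set Metric Pointwise

noncomputable section

abbrev E (n : ℕ) := EuclideanSpace ℝ (Fin n)

/-- A closed convex pointed cone with nonempty interior. -/
def IsGoodCone {n : ℕ} (C : Set (E n)) : Prop :=
  IsClosed C ∧ Convex ℝ C ∧ (∀ x ∈ C, ∀ r : ℝ, 0 ≤ r → r • x ∈ C) ∧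
    (∀ x ∈ C, -x ∈ C → x = 0) ∧ (interior C).Nonempty

/-- A `C`-pseudo-cone. -/
def IsPseudoCone {n : ℕ} (C K : Set (E n)) : Prop :=
  K.Nonempty ∧ IsClosed K ∧ Convex ℝ K ∧ K ⊆ C ∧ (0 : E n) ∉ K ∧ K + C = K

/-- The dual cone of `C`. -/
def dualCone {n : ℕ} (C : Set (E n)) : Set (E n) := {x | ∀ y ∈ C, (inner ℝ x y : ℝ) ≤ 0}

/-- Ω_C = S^{n-1} ∩ int C. -/
def Omega {n : ℕ} (C : Set (E n)) : Set (E n) := {v | ‖v‖ = 1} ∩ interior C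

/-- Radial function. -/
def radial {n : ℕ} (K : Set (E n)) (v : E n) : ℝ := sInf {r : ℝ | 0 < r ∧ r • v ∈ K}

/-- Support function. -/
def suppFn {n : ℕ} (K : Set (E n)) (u : E n) : ℝ := sSup ((fun y => (inner ℝ u y : ℝ)) '' K)

/-- Copolar set. -/
def copolar {n : ℕ} (K : Set (E n)) : Set (E n) := {x | ∀ y ∈ K, (inner ℝ x y : ℝ) ≤ -1}

/-- Convexification of `f`. -/
def convexif {n : ℕ} (C : Set (E n)) (f : E n → ℝ) : Set (E n) :=
  ⋂₀ {K | IsPseudoCone C K ∧ ∀ v ∈ Omega C, f v • v ∈ K}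

/-- Pseudo-conjugate of a function on a domain `D` of directions. -/
def pconj {n : ℕ} (D : Set (E n)) (f : E n → ℝ) (u : E n) : ℝ :=
  sSup ((fun v => 1 / (|(inner ℝ u v : ℝ)| * f v)) '' D)

/-- `u` is an outer normal vector of `K` at `x`. -/
def IsNormalAt {n : ℕ} (K : Set (E n)) (u x : E n) : Prop :=
  x ∈ K ∧ ∀ y ∈ K, (inner ℝ u (y - x) : ℝ) ≤ 0

/-!
For `v ∈ Ω_C` the point `ρ_K(v) v` lies in `K` (the ray through `v` meets `K` because `K + C = K`,
and `K` is closed), which gives `≥`. Conversely, for `y ∈ K` and `c ∈ int C` the point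
`w = y + t c` lies in `K ∩ int C`, so `ρ_K(w/‖w‖) ≤ ‖w‖`; as `⟪u, ·⟫ ≤ 0` on `C` this yields
`⟪u, y⟫ + t ⟪u, c⟫ ≤ ⟪u, w/‖w‖⟫ ρ_K(w/‖w‖)`, and `t → 0⁺` gives `≤`.
-/

section Cone

variable {V : Type*} [AddCommGroup V] [Module ℝ V] {C : Set V}

lemma add_mem_of_convex_of_smul_mem (hconv : Convex ℝ C)
    (hsmul : ∀ x ∈ C, ∀ r : ℝ, 0 ≤ r → r • x ∈ C) {x y : V} (hx : x ∈ C) (hy : y ∈ C) :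
    x + y ∈ C := by
  have hmid := hconv hx hy (by norm_num : (0 : ℝ) ≤ 1 / 2) (by norm_num) (add_halves 1)
  have h := hsmul _ hmid 2 zero_le_two
  rwa [smul_add, smul_smul, smul_smul, mul_one_div_cancel two_ne_zero, one_smul, one_smul] at h

lemma smul_mem_interior_of_smul_mem [TopologicalSpace V] [ContinuousConstSMul ℝ V]
    (hsmul : ∀ x ∈ C, ∀ r : ℝ, 0 ≤ r → r • x ∈ C) {x : V} (hx : x ∈ interior C) {r : ℝ} (hr : 0 < r) : r • x ∈ interior C := by
  have hrC : r • C ⊆ C := by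
    rintro _ ⟨y, hy, rfl⟩
    exact hsmul y hy r hr.le
  exact interior_mono hrC (by rw [interior_smul₀ hr.ne']; exact smul_mem_smul_set hx)

lemma add_mem_interior_of_convex_of_smul_mem [TopologicalSpace V] [IsTopologicalAddGroup V]
    (hconv : Convex ℝ C) (hsmul : ∀ x ∈ C, ∀ r : ℝ, 0 ≤ r → r • x ∈ C) {x c : V} (hx : x ∈ C)
    (hc : c ∈ interior C) : x + c ∈ interior C := by
  have hxC : x +ᵥ C ⊆ C := by
    rintro _ ⟨y, hy, rfl⟩
    exact add_mem_of_convex_of_smul_mem hconv hsmul hx hy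
  exact interior_mono hxC (by rw [interior_vadd]; exact vadd_mem_vadd_set hc)

lemma exists_pos_smul_mem_of_add_eq [TopologicalSpace V] [IsTopologicalAddGroup V]
    [ContinuousSMul ℝ V] (hsmul : ∀ x ∈ C, ∀ r : ℝ, 0 ≤ r → r • x ∈ C)
    {K : Set V} (hKne : K.Nonempty) (hKC : K + C = K) {v : V} (hv : v ∈ interior C) :
    ∃ r : ℝ, 0 < r ∧ r • v ∈ K := by
  obtain ⟨y, hy⟩ := hKne
  have hlim : Filter.Tendsto (fun t : ℝ => v - t⁻¹ • y) Filter.atTop (nhds v) := by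
    simpa using tendsto_const_nhds.sub ((tendsto_inv_atTop_zero (𝕜 := ℝ)).smul_const y)
  obtain ⟨t, ht, htC⟩ := ((Filter.eventually_gt_atTop 0).and
    (hlim.eventually (isOpen_interior.mem_nhds hv))).exists
  have hdiff : t • v - y ∈ C := by
    have h := hsmul _ (interior_subset htC) t ht.le
    rwa [smul_sub, smul_smul, mul_inv_cancel₀ ht.ne', one_smul] at h
  refine ⟨t, ht, ?_⟩
  rw [← hKC, ← add_sub_cancel y (t • v)]
  exact add_mem_add hy hdiff

end Cone

section Radial

variable {n : ℕ} {K : Set (E n)} {v : E n}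

lemma radial_le {s : ℝ} (hs : 0 < s) (hsK : s • v ∈ K) : radial K v ≤ s :=
  csInf_le ⟨0, fun _ hr => hr.1.le⟩ ⟨hs, hsK⟩

lemma radial_smul_mem (hK : IsClosed K) (hv : ∃ r : ℝ, 0 < r ∧ r • v ∈ K) :
    radial K v • v ∈ K := by
  have hclosed : IsClosed {r : ℝ | r • v ∈ K} := hK.preimage (continuous_id.smul continuous_const)
  exact closure_minimal (fun r hr => hr.2) hclosed
    (csInf_mem_closure hv (⟨0, fun _ hr => hr.1.le⟩ : BddBelow {r : ℝ | 0 < r ∧ r • v ∈ K}))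

lemma inv_norm_smul_mem_Omega {C : Set (E n)} (hsmul : ∀ x ∈ C, ∀ r : ℝ, 0 ≤ r → r • x ∈ C)
    {w : E n} (hw : w ∈ interior C) (hw0 : w ≠ 0) : ‖w‖⁻¹ • w ∈ Omega C :=
  ⟨by simp [norm_smul, hw0], smul_mem_interior_of_smul_mem hsmul hw (by positivity)⟩

end Radial

section PseudoCone

variable {n : ℕ} {C K : Set (E n)}

lemma add_smul_mem_inter_interior (hconv : Convex ℝ C)
    (hsmul : ∀ x ∈ C, ∀ r : ℝ, 0 ≤ r → r • x ∈ C) (hKsub : K ⊆ C) (hKC : K + C = K)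
    {y c : E n} (hy : y ∈ K) (hc : c ∈ interior C) {t : ℝ} (ht : 0 < t) :
    y + t • c ∈ K ∩ interior C := by
  have htc : t • c ∈ interior C := smul_mem_interior_of_smul_mem hsmul hc ht
  refine ⟨?_, add_mem_interior_of_convex_of_smul_mem hconv hsmul (hKsub hy) htc⟩
  rw [← hKC]
  exact add_mem_add hy (interior_subset htc)

lemma exists_mem_Omega_inner_le_mul_radial (hsmul : ∀ x ∈ C, ∀ r : ℝ, 0 ≤ r → r • x ∈ C)
    (hK0 : (0 : E n) ∉ K) {u w : E n} (hu : u ∈ dualCone C) (hwK : w ∈ K)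
    (hwC : w ∈ interior C) : ∃ v ∈ Omega C, inner ℝ u w ≤ inner ℝ u v * radial K v := by
  have hw0 : w ≠ 0 := ne_of_mem_of_not_mem hwK hK0
  have hv := inv_norm_smul_mem_Omega hsmul hwC hw0
  refine ⟨_, hv, ?_⟩
  have hw : ‖w‖ • ‖w‖⁻¹ • w = w := by
    rw [smul_smul, mul_inv_cancel₀ (norm_ne_zero_iff.2 hw0), one_smul]
  have hρ : radial K (‖w‖⁻¹ • w) ≤ ‖w‖ := radial_le (norm_pos_iff.2 hw0) (hw.symm ▸ hwK)
  calc inner ℝ u w = inner ℝ u (‖w‖⁻¹ • w) * ‖w‖ := by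
        rw [mul_comm, ← real_inner_smul_right, hw]
    _ ≤ inner ℝ u (‖w‖⁻¹ • w) * radial K (‖w‖⁻¹ • w) :=
        mul_le_mul_of_nonpos_left hρ (hu _ (interior_subset hv.2))

lemma inner_le_sSup_inner_mul_radial (hconv : Convex ℝ C)
    (hsmul : ∀ x ∈ C, ∀ r : ℝ, 0 ≤ r → r • x ∈ C) (hint : (interior C).Nonempty)
    (hKsub : K ⊆ C) (hK0 : (0 : E n) ∉ K) (hKC : K + C = K) {u : E n} (hu : u ∈ dualCone C)
    (hbdd : BddAbove ((fun v => inner ℝ u v * radial K v) '' Omega C)) {y : E n} (hy : y ∈ K) :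
    inner ℝ u y ≤ sSup ((fun v => inner ℝ u v * radial K v) '' Omega C) := by
  obtain ⟨c, hc⟩ := hint
  have hnear : ∀ t > (0 : ℝ),
      inner ℝ u y + t * inner ℝ u c ≤ sSup ((fun v => inner ℝ u v * radial K v) '' Omega C) := by
    intro t ht
    obtain ⟨hK', hC'⟩ := add_smul_mem_inter_interior hconv hsmul hKsub hKC hy hc ht
    obtain ⟨v, hv, hle⟩ := exists_mem_Omega_inner_le_mul_radial hsmul hK0 hu hK' hC'
    rw [inner_add_right, real_inner_smul_right] at hle
    exact hle.trans (le_csSup hbdd (mem_image_of_mem _ hv))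
  have hlim : Filter.Tendsto (fun t : ℝ => inner ℝ u y + t * inner ℝ u c)
      (nhdsWithin 0 (Ioi 0)) (nhds (inner ℝ u y)) := by
    have hcont : Continuous (fun t : ℝ => inner ℝ u y + t * inner ℝ u c) := by fun_prop
    simpa using (hcont.tendsto 0).mono_left nhdsWithin_le_nhds
  exact le_of_tendsto hlim (eventually_nhdsWithin_of_forall hnear)

end PseudoCone

theorem stmt3 {n : ℕ} (C K : Set (E n)) (hC : IsGoodCone C) (hK : IsPseudoCone C K)
    (u : E n) (hu : u ∈ Omega (dualCone C)) :
    suppFn K u = sSup ((fun v => (inner ℝ u v : ℝ) * radial K v) '' Omega C) := by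
  obtain ⟨-, hconv, hsmul, -, hint⟩ := hC
  obtain ⟨hKne, hKcl, -, hKsub, hK0, hKC⟩ := hK
  have huC : u ∈ dualCone C := interior_subset hu.2
  have hsubset : (fun v => inner ℝ u v * radial K v) '' Omega C ⊆ (fun y => inner ℝ u y) '' K := by
    rintro _ ⟨v, hv, rfl⟩
    refine ⟨radial K v • v, radial_smul_mem hKcl ?_, by simp [real_inner_smul_right, mul_comm]⟩
    exact exists_pos_smul_mem_of_add_eq hsmul hKne hKC hv.2
  have hbdd : BddAbove ((fun y => inner ℝ u y) '' K) :=
    ⟨0, forall_mem_image.2 fun y hy => huC y (hKsub hy)⟩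
  have hOmega : (Omega C).Nonempty := by
    obtain ⟨y, hy⟩ := hKne
    obtain ⟨c, hc⟩ := hint
    obtain ⟨hK', hC'⟩ := add_smul_mem_inter_interior hconv hsmul hKsub hKC hy hc one_pos
    exact ⟨_, inv_norm_smul_mem_Omega hsmul hC' (ne_of_mem_of_not_mem hK' hK0)⟩
  apply le_antisymm
  · exact csSup_le (hKne.image _) (forall_mem_image.2 fun y hy =>
      inner_le_sSup_inner_mul_radial hconv hsmul hint hKsub hK0 hKC huC (hbdd.mono hsubset) hy)
  · exact csSup_le_csSup hbdd (hOmega.image _) hsubset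
end
end

section
/- For a C-pseudo-cone K, the negated support function satisfies −h_K(u) = inf_{v ∈ Ω_C} |⟨u,v⟩| ρ_K(v) for u ∈ Ω_{C°}. -/
open Set Metric Pointwise

noncomputable section

open Filter Topology

/-! Every `v ∈ Ω_C` gives the point `ρ_K(v) v ∈ K`, whose pairing with `u ∈ C°` is
`-|⟨u,v⟩| ρ_K(v)`; hence `-h_K(u)` is a lower bound. Conversely every `y ∈ K ∩ int C` is
`‖y‖ v` with `v ∈ Ω_C` and `ρ_K(v) ≤ ‖y‖`, so the infimum is at most `-⟨u,y⟩`; and since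
`K + C = K`, any `y ∈ K` is the limit of the points `y + t c ∈ K ∩ int C`, `c ∈ int C`, `t ↓ 0`. -/

lemma exists_pos_add_smul_mem_of_mem_interior {F : Type*} [NormedAddCommGroup F]
    [NormedSpace ℝ F] {s : Set F} {x : F} (hx : x ∈ interior s) (w : F) :
    ∃ t : ℝ, 0 < t ∧ x + t • w ∈ s := by
  have hlim : Tendsto (fun t : ℝ => x + t • w) (𝓝[>] 0) (𝓝 x) := by
    have hcont : Continuous (fun t : ℝ => x + t • w) := by fun_prop
    simpa using (hcont.tendsto 0).mono_left nhdsWithin_le_nhds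
  obtain ⟨t, hts, ht⟩ :=
    ((hlim.eventually (mem_interior_iff_mem_nhds.1 hx)).and self_mem_nhdsWithin).exists
  exact ⟨t, ht, hts⟩

namespace IsGoodCone

variable {n : ℕ} {C : Set (E n)}

lemma add_mem (hC : IsGoodCone C) {x y : E n} (hx : x ∈ C) (hy : y ∈ C) : x + y ∈ C := by
  have hmid := hC.2.1 hx hy (by norm_num : (0 : ℝ) ≤ 1 / 2) (by norm_num : (0 : ℝ) ≤ 1 / 2)
    (by norm_num)
  convert hC.2.2.1 _ hmid 2 zero_le_two using 1
  rw [smul_add, smul_smul, smul_smul]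
  norm_num

lemma smul_mem_interior (hC : IsGoodCone C) {x : E n} {t : ℝ} (ht : 0 < t)
    (hx : x ∈ interior C) : t • x ∈ interior C := by
  have hsub : t • C ⊆ C := by
    rintro _ ⟨w, hw, rfl⟩
    exact hC.2.2.1 w hw t ht.le
  apply interior_mono hsub
  rw [interior_smul₀ ht.ne']
  exact smul_mem_smul_set hx

lemma add_mem_interior (hC : IsGoodCone C) {x w : E n} (hx : x ∈ C) (hw : w ∈ interior C) :
    x + w ∈ interior C := by
  have hsub : x +ᵥ interior C ⊆ interior C := by
    refine interior_maximal ?_ (isOpen_interior.vadd x)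
    rintro _ ⟨z, hz, rfl⟩
    exact hC.add_mem hx (interior_subset hz)
  exact hsub (vadd_mem_vadd_set hw)

lemma inv_norm_smul_mem_omega (hC : IsGoodCone C) {x : E n} (hx : x ∈ interior C)
    (hx0 : x ≠ 0) : ‖x‖⁻¹ • x ∈ Omega C :=
  ⟨norm_smul_inv_norm hx0, hC.smul_mem_interior (inv_pos.2 (norm_pos_iff.2 hx0)) hx⟩

end IsGoodCone

namespace IsPseudoCone

variable {n : ℕ} {C K : Set (E n)}

lemma subset (hK : IsPseudoCone C K) : K ⊆ C := hK.2.2.2.1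

lemma ne_zero (hK : IsPseudoCone C K) {y : E n} (hy : y ∈ K) : y ≠ 0 :=
  fun h => hK.2.2.2.2.1 (h ▸ hy)

lemma add_mem (hK : IsPseudoCone C K) {y c : E n} (hy : y ∈ K) (hc : c ∈ C) : y + c ∈ K :=
  hK.2.2.2.2.2 ▸ Set.add_mem_add hy hc

lemma exists_pos_smul_mem (hC : IsGoodCone C) (hK : IsPseudoCone C K) {v : E n}
    (hv : v ∈ interior C) : ∃ r : ℝ, 0 < r ∧ r • v ∈ K := by
  obtain ⟨y, hy⟩ := hK.1
  obtain ⟨t, ht, hvt⟩ := exists_pos_add_smul_mem_of_mem_interior hv (-y)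
  refine ⟨t⁻¹, inv_pos.2 ht, ?_⟩
  convert hK.add_mem hy (hC.2.2.1 _ hvt _ (inv_nonneg.2 ht.le)) using 1
  rw [smul_add, smul_smul, inv_mul_cancel₀ ht.ne', one_smul]
  abel

lemma radial_smul_mem (hC : IsGoodCone C) (hK : IsPseudoCone C K) {v : E n}
    (hv : v ∈ interior C) : radial K v • v ∈ K := by
  have hS : {r : ℝ | 0 < r ∧ r • v ∈ K} = {r | r • v ∈ K} ∩ Ici 0 := by
    ext r
    refine ⟨fun h => ⟨h.2, h.1.le⟩, fun ⟨hr, hr0⟩ => ⟨hr0.lt_of_ne ?_, hr⟩⟩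
    rintro rfl
    exact hK.ne_zero hr (zero_smul ℝ v)
  have hclosed : IsClosed {r : ℝ | 0 < r ∧ r • v ∈ K} :=
    hS ▸ (hK.2.1.preimage (by fun_prop)).inter isClosed_Ici
  obtain ⟨r, hr, hrv⟩ := hK.exists_pos_smul_mem hC hv
  exact (hclosed.csInf_mem ⟨r, hr, hrv⟩ ⟨0, fun _ h => h.1.le⟩).2

end IsPseudoCone

section SupportFunction

variable {n : ℕ} {C K : Set (E n)} {u : E n}

lemma radial_le_s4 {v : E n} {r : ℝ} (hr : 0 < r) (hrv : r • v ∈ K) : radial K v ≤ r :=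
  csInf_le ⟨0, fun _ h => h.1.le⟩ ⟨hr, hrv⟩

lemma inner_le_suppFn (hu : u ∈ dualCone C) (hKC : K ⊆ C) {y : E n} (hy : y ∈ K) :
    inner ℝ u y ≤ suppFn K u :=
  le_csSup ⟨0, by rintro _ ⟨z, hz, rfl⟩; exact hu z (hKC hz)⟩ ⟨y, hy, rfl⟩

lemma neg_suppFn_le_abs_inner_mul_radial (hC : IsGoodCone C) (hK : IsPseudoCone C K)
    (hu : u ∈ dualCone C) {v : E n} (hv : v ∈ interior C) :
    -suppFn K u ≤ |inner ℝ u v| * radial K v := by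
  have hρ := inner_le_suppFn hu hK.subset (hK.radial_smul_mem hC hv)
  rw [real_inner_smul_right] at hρ
  rw [abs_of_nonpos (hu v (interior_subset hv))]
  linarith

lemma exists_mem_omega_abs_inner_mul_radial_le (hC : IsGoodCone C) (hK : IsPseudoCone C K)
    (hu : u ∈ dualCone C) {y : E n} (hy : y ∈ K) (hyC : y ∈ interior C) :
    ∃ v ∈ Omega C, |inner ℝ u v| * radial K v ≤ -inner ℝ u y := by
  have hy0 := hK.ne_zero hy
  have hpos : 0 < ‖y‖ := norm_pos_iff.2 hy0
  have hv := hC.inv_norm_smul_mem_omega hyC hy0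
  have hvy : ‖y‖ • (‖y‖⁻¹ • y) = y := smul_inv_smul₀ hpos.ne' y
  generalize ‖y‖⁻¹ • y = v at hv hvy
  refine ⟨v, hv, ?_⟩
  have hρ : radial K v ≤ ‖y‖ := radial_le_s4 hpos (hvy.symm ▸ hy)
  have huv : inner ℝ u v ≤ 0 := hu v (interior_subset hv.2)
  calc |inner ℝ u v| * radial K v ≤ |inner ℝ u v| * ‖y‖ :=
        mul_le_mul_of_nonneg_left hρ (abs_nonneg _)
    _ = -inner ℝ u y := by
        conv_rhs => rw [← hvy]
        rw [real_inner_smul_right, abs_of_nonpos huv]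
        ring

lemma sInf_abs_inner_mul_radial_le (hC : IsGoodCone C) (hK : IsPseudoCone C K)
    (hu : u ∈ dualCone C) {y : E n} (hy : y ∈ K) :
    sInf ((fun v => |inner ℝ u v| * radial K v) '' Omega C) ≤ -inner ℝ u y := by
  have hbdd : BddBelow ((fun v => |inner ℝ u v| * radial K v) '' Omega C) := by
    refine ⟨-suppFn K u, ?_⟩
    rintro _ ⟨v, hv, rfl⟩
    exact neg_suppFn_le_abs_inner_mul_radial hC hK hu hv.2
  obtain ⟨c, hc⟩ := hC.2.2.2.2
  have hlim : Tendsto (fun t : ℝ => -inner ℝ u (y + t • c)) (𝓝[>] 0) (𝓝 (-inner ℝ u y)) := by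
    have hcont : Continuous (fun t : ℝ => -inner ℝ u (y + t • c)) := by fun_prop
    simpa using (hcont.tendsto 0).mono_left nhdsWithin_le_nhds
  refine ge_of_tendsto hlim (eventually_nhdsWithin_of_forall fun t (ht : 0 < t) => ?_)
  obtain ⟨v, hv, hle⟩ := exists_mem_omega_abs_inner_mul_radial_le hC hK hu
    (hK.add_mem hy (hC.2.2.1 c (interior_subset hc) t ht.le))
    (hC.add_mem_interior (hK.subset hy) (hC.smul_mem_interior ht hc))
  exact (csInf_le hbdd ⟨v, hv, rfl⟩).trans hle

end SupportFunction

theorem stmt4 {n : ℕ} (C K : Set (E n)) (hC : IsGoodCone C) (hK : IsPseudoCone C K)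
    (u : E n) (hu : u ∈ Omega (dualCone C)) :
    -suppFn K u = sInf ((fun v => |(inner ℝ u v : ℝ)| * radial K v) '' Omega C) := by
  have hu' : u ∈ dualCone C := interior_subset hu.2
  obtain ⟨y, hy⟩ := hK.1
  obtain ⟨c, hc⟩ := hC.2.2.2.2
  obtain ⟨v, hv, -⟩ := exists_mem_omega_abs_inner_mul_radial_le hC hK hu'
    (hK.add_mem hy (interior_subset hc)) (hC.add_mem_interior (hK.subset hy) hc)
  apply le_antisymm
  · refine le_csInf ⟨_, v, hv, rfl⟩ ?_
    rintro _ ⟨w, hw, rfl⟩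
    exact neg_suppFn_le_abs_inner_mul_radial hC hK hu' hw.2
  · rw [le_neg]
    refine csSup_le (hK.1.image _) ?_
    rintro _ ⟨z, hz, rfl⟩
    rw [le_neg]
    exact sInf_abs_inner_mul_radial_le hC hK hu' hz
end
end

section
/- For every C-pseudo-cone K, the double copolar satisfies K** = K, where K* = {x : ⟨x,y⟩ ≤ −1 for all y ∈ K}. -/
open Set Metric Pointwise

noncomputable section

/-! The inclusion `K ⊆ K**` is formal. Conversely, a point `z ∉ K` is strictly separated from
`K` by some `u`: `⟪u, z⟫ < c < ⟪u, y⟫` for `y ∈ K`. As `K + C = K` and `C` is a cone, `K` is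
stable under dilations by factors `t ≥ 1`, so `u` is nonnegative on `K` (else it would tend to
`-∞` along a ray). If `c > 0`, then `-(c⁻¹ • u) ∈ K*` and `⟪z, -(c⁻¹ • u)⟫ > -1`. If `c ≤ 0`, then
`⟪u, z⟫ < 0`; for any `x ∈ K*` (nonempty, by separating `0` from `K`) the points `x - t • u`,
`t ≥ 0`, stay in `K*`, and for large `t` their inner product with `z` exceeds `-1`. -/

open scoped RealInnerProductSpace

section Copolar

variable {n : ℕ} {K : Set (E n)}

lemma subset_copolar_copolar (K : Set (E n)) : K ⊆ copolar (copolar K) :=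
  fun z hz x hx => real_inner_comm z x ▸ hx z hz

lemma exists_inner_lt_forall_lt_inner (hcl : IsClosed K) (hcv : Convex ℝ K) {z : E n}
    (hz : z ∉ K) : ∃ (u : E n) (c : ℝ), ⟪u, z⟫ < c ∧ ∀ y ∈ K, c < ⟪u, y⟫ := by
  obtain ⟨f, c, hfz, hfK⟩ := geometric_hahn_banach_point_closed hcv hcl hz
  refine ⟨(InnerProductSpace.toDual ℝ (E n)).symm f, c, ?_, fun y hy => ?_⟩
  · rwa [InnerProductSpace.toDual_symm_apply]
  · rw [InnerProductSpace.toDual_symm_apply]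
    exact hfK y hy

lemma inner_nonneg_of_forall_lt_inner (hdil : ∀ y ∈ K, ∀ t : ℝ, 1 ≤ t → t • y ∈ K)
    {u : E n} {c : ℝ} (hu : ∀ y ∈ K, c < ⟪u, y⟫) : ∀ y ∈ K, 0 ≤ ⟪u, y⟫ := by
  intro y hy
  by_contra! hneg
  set t := max 1 (c / ⟪u, y⟫)
  have hct : c / ⟪u, y⟫ ≤ t := le_max_right _ _
  have hlt : c < t * ⟪u, y⟫ := by
    simpa only [real_inner_smul_right] using hu _ (hdil y hy t (le_max_left _ _))
  have : t * ⟪u, y⟫ ≤ c := (div_le_iff_of_neg hneg).mp hct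
  linarith

lemma neg_inv_smul_mem_copolar {u : E n} {c : ℝ} (hc : 0 < c) (hu : ∀ y ∈ K, c ≤ ⟪u, y⟫) :
    -(c⁻¹ • u) ∈ copolar K := by
  intro y hy
  rw [inner_neg_left, real_inner_smul_left, neg_le_neg_iff, le_inv_mul_iff₀ hc, mul_one]
  exact hu y hy

lemma sub_smul_mem_copolar {x u : E n} (hx : x ∈ copolar K) (hu : ∀ y ∈ K, 0 ≤ ⟪u, y⟫)
    {t : ℝ} (ht : 0 ≤ t) : x - t • u ∈ copolar K := by
  intro y hy
  rw [inner_sub_left, real_inner_smul_left]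
  nlinarith [hx y hy, hu y hy]

lemma copolar_nonempty (hcl : IsClosed K) (hcv : Convex ℝ K) (h0 : (0 : E n) ∉ K) :
    (copolar K).Nonempty := by
  obtain ⟨u, c, hu0, huK⟩ := exists_inner_lt_forall_lt_inner hcl hcv h0
  rw [inner_zero_right] at hu0
  exact ⟨_, neg_inv_smul_mem_copolar hu0 fun y hy => (huK y hy).le⟩

lemma exists_mem_copolar_inner_gt (hcl : IsClosed K) (hcv : Convex ℝ K) (h0 : (0 : E n) ∉ K)
    (hdil : ∀ y ∈ K, ∀ t : ℝ, 1 ≤ t → t • y ∈ K) {z : E n} (hz : z ∉ K) :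
    ∃ x ∈ copolar K, -1 < ⟪z, x⟫ := by
  obtain ⟨u, c, huz, huK⟩ := exists_inner_lt_forall_lt_inner hcl hcv hz
  rcases lt_or_ge 0 c with hc | hc
  · refine ⟨_, neg_inv_smul_mem_copolar hc fun y hy => (huK y hy).le, ?_⟩
    rw [inner_neg_right, real_inner_smul_right, real_inner_comm, neg_lt_neg_iff,
      inv_mul_lt_iff₀ hc, mul_one]
    exact huz
  · obtain ⟨x, hx⟩ := copolar_nonempty hcl hcv h0
    by_cases hzx : -1 < ⟪z, x⟫
    · exact ⟨x, hx, hzx⟩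
    have huz' : ⟪u, z⟫ < 0 := huz.trans_le hc
    have hxz : ⟪x, z⟫ < 0 := by rw [real_inner_comm]; linarith
    refine ⟨x - (⟪x, z⟫ / ⟪u, z⟫) • u,
      sub_smul_mem_copolar hx (inner_nonneg_of_forall_lt_inner hdil huK)
        (div_nonneg_of_nonpos hxz.le huz'.le), ?_⟩
    rw [real_inner_comm, inner_sub_left, real_inner_smul_left, div_mul_cancel₀ _ huz'.ne]
    norm_num

lemma copolar_copolar_eq (hcl : IsClosed K) (hcv : Convex ℝ K) (h0 : (0 : E n) ∉ K)
    (hdil : ∀ y ∈ K, ∀ t : ℝ, 1 ≤ t → t • y ∈ K) : copolar (copolar K) = K := by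
  refine (subset_copolar_copolar K).antisymm' fun z hz => ?_
  by_contra hzK
  obtain ⟨x, hx, hzx⟩ := exists_mem_copolar_inner_gt hcl hcv h0 hdil hzK
  exact (hz x hx).not_gt hzx

end Copolar

lemma IsPseudoCone.smul_mem {n : ℕ} {C K : Set (E n)} (hC : IsGoodCone C) (hK : IsPseudoCone C K)
    {y : E n} (hy : y ∈ K) {t : ℝ} (ht : 1 ≤ t) : t • y ∈ K := by
  have hmem : y + (t - 1) • y ∈ K + C :=
    add_mem_add hy (hC.2.2.1 y (hK.2.2.2.1 hy) _ (sub_nonneg.mpr ht))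
  rwa [hK.2.2.2.2.2, sub_smul, one_smul, add_sub_cancel] at hmem

theorem stmt6 {n : ℕ} (C K : Set (E n)) (hC : IsGoodCone C) (hK : IsPseudoCone C K) :
    copolar (copolar K) = K :=
  copolar_copolar_eq hK.2.1 hK.2.2.1 hK.2.2.2.2.1 fun _ hy _ ht => hK.smul_mem hC hy ht
end
end

section
/- Let f : Ω_C → (0,∞) be bounded away from 0. Then for each u ∈ Ω_{C°}, the pseudo-conjugate f*(u) := sup_{v ∈ Ω_C} 1/(|⟨u,v⟩| f(v)) is finite, and f* : Ω_{C°} → (0,∞) is bounded away from 0. -/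
open Set Metric Pointwise

noncomputable section

/-!
An interior point `u` of `C°` keeps a uniform margin `⟪u, v⟫ ≤ -ε` over unit vectors `v ∈ C`,
so `f*(u) ≤ 1 / (ε a)`. Conversely, fixing one direction `v₀ ∈ Ω_C`, the bound
`|⟪u, v₀⟫| ≤ 1` gives `f*(u) ≥ 1 / f(v₀)` for every unit `u`.
-/

lemma exists_inner_le_neg_of_mem_interior_dualCone {n : ℕ} {C : Set (E n)} {u : E n}
    (hu : u ∈ interior (dualCone C)) :
    ∃ ε > (0 : ℝ), ∀ v ∈ C, ‖v‖ = 1 → inner ℝ u v ≤ -ε := by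
  obtain ⟨ε, hε, hball⟩ := Metric.isOpen_iff.mp isOpen_interior u hu
  refine ⟨ε / 2, half_pos hε, fun v hvC hv => ?_⟩
  -- `u + (ε/2) • v` is still in `C°`; pairing it with `v` itself yields the margin.
  have hmem : u + (ε / 2) • v ∈ dualCone C := interior_subset <| hball <| by
    simpa [dist_eq_norm, norm_smul, hv, abs_of_pos hε] using hε
  have h := hmem v hvC
  rw [inner_add_left, real_inner_smul_left, real_inner_self_eq_norm_sq, hv] at h
  linarith

lemma bddAbove_image_one_div_abs_inner_mul {F : Type*} [NormedAddCommGroup F]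
    [InnerProductSpace ℝ F] {D : Set F} {f : F → ℝ} {u : F} {a ε : ℝ}
    (ha : 0 < a) (hε : 0 < ε) (hf : ∀ v ∈ D, a ≤ f v) (hu : ∀ v ∈ D, ε ≤ |inner ℝ u v|) :
    BddAbove ((fun v => 1 / (|(inner ℝ u v : ℝ)| * f v)) '' D) := by
  refine ⟨1 / (ε * a), ?_⟩
  rintro _ ⟨v, hv, rfl⟩
  exact one_div_le_one_div_of_le (by positivity)
    (mul_le_mul (hu v hv) (hf v hv) ha.le (abs_nonneg _))

lemma Omega_nonempty {n : ℕ} [Nontrivial (E n)] {C : Set (E n)}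
    (hsmul : ∀ x ∈ C, ∀ r : ℝ, 0 ≤ r → r • x ∈ C) (hint : (interior C).Nonempty) :
    (Omega C).Nonempty := by
  obtain ⟨x, hx, hx0⟩ : (interior C ∩ {0}ᶜ).Nonempty :=
    (dense_compl_singleton (0 : E n)).inter_open_nonempty _ isOpen_interior hint
  have hnx : 0 < ‖x‖ := norm_pos_iff.mpr hx0
  refine ⟨‖x‖⁻¹ • x, by simp [norm_smul, hnx.ne'], ?_⟩
  have hx' : ‖x‖⁻¹ • x ∈ interior (‖x‖⁻¹ • C) := by
    rw [interior_smul₀ (inv_ne_zero hnx.ne')]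
    exact smul_mem_smul_set hx
  refine interior_mono ?_ hx'
  rintro _ ⟨z, hz, rfl⟩
  exact hsmul z hz _ (inv_nonneg.mpr hnx.le)

lemma one_div_le_pconj {n : ℕ} {D : Set (E n)} {f : E n → ℝ} {u v : E n}
    (hu : ‖u‖ = 1) (hv : v ∈ D) (hv1 : ‖v‖ = 1) (huv : 0 < |(inner ℝ u v : ℝ)|)
    (hfv : 0 < f v) (hbdd : BddAbove ((fun v => 1 / (|(inner ℝ u v : ℝ)| * f v)) '' D)) :
    1 / f v ≤ pconj D f u := by
  have hle : |(inner ℝ u v : ℝ)| ≤ 1 := by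
    simpa [hu, hv1] using abs_real_inner_le_norm u v
  calc 1 / f v ≤ 1 / (|(inner ℝ u v : ℝ)| * f v) :=
        one_div_le_one_div_of_le (by positivity) (mul_le_of_le_one_left hfv.le hle)
    _ ≤ pconj D f u := le_csSup hbdd ⟨v, hv, rfl⟩

theorem stmt11 {n : ℕ} (C : Set (E n)) (hC : IsGoodCone C) (f : E n → ℝ)
    (a : ℝ) (ha : 0 < a) (hf : ∀ v ∈ Omega C, a ≤ f v) :
    (∀ u ∈ Omega (dualCone C), BddAbove ((fun v => 1 / (|(inner ℝ u v : ℝ)| * f v)) '' Omega C)) ∧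
    (∃ b > (0:ℝ), ∀ u ∈ Omega (dualCone C), b ≤ pconj (Omega C) f u) := by
  have hmargin : ∀ u ∈ Omega (dualCone C), ∃ ε > (0 : ℝ), ∀ v ∈ Omega C, ε ≤ |inner ℝ u v| := by
    intro u hu
    obtain ⟨ε, hε, h⟩ := exists_inner_le_neg_of_mem_interior_dualCone hu.2
    exact ⟨ε, hε, fun v hv =>
      le_abs.mpr (Or.inr (by linarith [h v (interior_subset hv.2) hv.1]))⟩
  have hbdd : ∀ u ∈ Omega (dualCone C),
      BddAbove ((fun v => 1 / (|(inner ℝ u v : ℝ)| * f v)) '' Omega C) := fun u hu => by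
    obtain ⟨ε, hε, h⟩ := hmargin u hu
    exact bddAbove_image_one_div_abs_inner_mul ha hε hf h
  refine ⟨hbdd, ?_⟩
  rcases (Omega (dualCone C)).eq_empty_or_nonempty with hempty | ⟨u₀, hu₀⟩
  · exact ⟨1, one_pos, by simp [hempty]⟩
  have : Nontrivial (E n) :=
    nontrivial_of_ne u₀ 0 <| norm_ne_zero_iff.mp <| (show ‖u₀‖ = 1 from hu₀.1) ▸ one_ne_zero
  obtain ⟨v₀, hv₀⟩ := Omega_nonempty hC.2.2.1 hC.2.2.2.2
  refine ⟨1 / f v₀, one_div_pos.mpr (ha.trans_le (hf v₀ hv₀)), fun u hu => ?_⟩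
  obtain ⟨ε, hε, h⟩ := hmargin u hu
  exact one_div_le_pconj hu.1 hv₀ hv₀.1 (hε.trans_le (h v₀ hv₀))
    (ha.trans_le (hf v₀ hv₀)) (hbdd u hu)
end
end

section
/- Let (K_j) be a sequence of C-pseudo-cones converging (in the sense that K_j ∩ tB^n → K_0 ∩ tB^n in Hausdorff distance for all large t) to a C-pseudo-cone K_0, each K_j at distance 1 from the origin. Let u ∈ Ω_{C°} be such that for each j ∈ ℕ∪{0}, u is a normal vector of K_j at exactly one boundary point x_j = ρ_{K_j}(v_j)v_j with v_j ∈ Ω_C. Then v_j → v_0 as j → ∞ (i.e., the reverse radial Gauss maps converge pointwise: α*_{K_j}(u) → α*_{K_0}(u)). -/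
open Set Metric Pointwise

noncomputable section

/-! The points `x_j = ρ_{K_j}(v_j) v_j` maximize `⟪u, ·⟫` on `K_j`. Since `u ∈ int C°`, there is
`c > 0` with `⟪u, y⟫ ≤ -c ‖y‖` on `C`, and `K_j` eventually comes within distance `1` of the fixed
point `x_0 ∈ K_0`; hence the `x_j` are eventually bounded. Hausdorff convergence of the truncations
`K_j ∩ t B^n` then shows that every cluster point of `(x_j)` lies in `K_0` and maximizes `⟪u, ·⟫`
there, so it equals `x_0` by uniqueness. By compactness `x_j → x_0`, and `v_j = x_j / ‖x_j‖`. -/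

open Filter Topology InnerProductSpace

section HausdorffTruncation

variable {X ι : Type*} [PseudoMetricSpace X] {l : Filter ι} {K : ι → Set X} {K0 : Set X}
  {o : X} {r : ℝ}

lemma inter_closedBall_nonempty_of_infDist_lt {A : Set X} (hA : A.Nonempty)
    (h : infDist o A < r) : (A ∩ closedBall o r).Nonempty := by
  obtain ⟨y, hy, hyo⟩ := (infDist_lt_iff hA).1 h
  exact ⟨y, hy, mem_closedBall'.2 hyo.le⟩

lemma hausdorffEDist_inter_closedBall_ne_top {A B : Set X} (hA : (A ∩ closedBall o r).Nonempty)
    (hB : (B ∩ closedBall o r).Nonempty) :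
    hausdorffEDist (A ∩ closedBall o r) (B ∩ closedBall o r) ≠ ⊤ :=
  hausdorffEDist_ne_top_of_nonempty_of_bounded hA hB
    (isBounded_closedBall.subset inter_subset_right) (isBounded_closedBall.subset inter_subset_right)

lemma eventually_inter_nonempty_of_mem_nhds
    (hconv : Tendsto (fun j => hausdorffDist (K j ∩ closedBall o r) (K0 ∩ closedBall o r)) l (𝓝 0))
    (hne : ∀ᶠ j in l, (K j ∩ closedBall o r).Nonempty) {y : X} (hy : y ∈ K0 ∩ closedBall o r)
    {U : Set X} (hU : U ∈ 𝓝 y) : ∀ᶠ j in l, (K j ∩ U).Nonempty := by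
  obtain ⟨ε, hε, hεU⟩ := Metric.mem_nhds_iff.1 hU
  filter_upwards [hne, hconv.eventually (gt_mem_nhds hε)] with j hj hjε
  obtain ⟨q, hq, hqy⟩ := exists_dist_lt_of_hausdorffDist_lt' hy hjε
    (hausdorffEDist_inter_closedBall_ne_top hj ⟨y, hy⟩)
  exact ⟨q, hq.1, hεU hqy⟩

lemma mem_of_mapClusterPt_of_tendsto_hausdorffDist
    (hconv : Tendsto (fun j => hausdorffDist (K j ∩ closedBall o r) (K0 ∩ closedBall o r)) l (𝓝 0))
    (hK0 : IsClosed K0) (hne0 : (K0 ∩ closedBall o r).Nonempty) {x : ι → X}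
    (hx : ∀ᶠ j in l, x j ∈ K j ∩ closedBall o r) {z : X} (hz : MapClusterPt z l x) : z ∈ K0 := by
  refine hK0.closure_subset (Metric.mem_closure_iff.2 fun ε hε => ?_)
  obtain ⟨j, hjz, hjK, hjε⟩ := ((hz.frequently (ball_mem_nhds z (half_pos hε))).and_eventually
    (hx.and (hconv.eventually (gt_mem_nhds (half_pos hε))))).exists
  obtain ⟨q, hq, hjq⟩ := exists_dist_lt_of_hausdorffDist_lt hjK hjε
    (hausdorffEDist_inter_closedBall_ne_top ⟨x j, hjK⟩ hne0)
  refine ⟨q, hq.1, ?_⟩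
  calc dist z q ≤ dist z (x j) + dist (x j) q := dist_triangle _ _ _
    _ < ε / 2 + ε / 2 := add_lt_add (mem_ball'.1 hjz) hjq
    _ = ε := add_halves ε

lemma isMaxOn_of_mapClusterPt_of_tendsto_hausdorffDist {t0 : ℝ}
    (hconv : ∀ r ≥ t0,
      Tendsto (fun j => hausdorffDist (K j ∩ closedBall o r) (K0 ∩ closedBall o r)) l (𝓝 0))
    (hne : ∀ r ≥ t0, ∀ᶠ j in l, (K j ∩ closedBall o r).Nonempty) {f : X → ℝ} (hf : Continuous f)
    {x : ι → X} (hmax : ∀ j, IsMaxOn f (K j) (x j)) {z : X} (hz : MapClusterPt z l x) :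
    IsMaxOn f K0 z := by
  refine isMaxOn_iff.2 fun y hy => ?_
  set r := max t0 (dist y o)
  refine le_of_forall_pos_lt_add fun ε hε => ?_
  have hnear_y : ∀ᶠ j in l, (K j ∩ {q | f y - ε / 2 < f q}).Nonempty :=
    eventually_inter_nonempty_of_mem_nhds (hconv r (le_max_left _ _)) (hne r (le_max_left _ _))
      ⟨hy, mem_closedBall.2 (le_max_right _ _)⟩
      (hf.continuousAt.eventually (lt_mem_nhds (sub_lt_self _ (half_pos hε))))
  have hnear_z : ∃ᶠ j in l, f (x j) < f z + ε / 2 :=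
    hz.frequently (hf.continuousAt.eventually (gt_mem_nhds (lt_add_of_pos_right _ (half_pos hε))))
  obtain ⟨j, hjz, q, hqK, hqy⟩ := (hnear_z.and_eventually hnear_y).exists
  calc f y < f q + ε / 2 := by linarith [hqy.out]
    _ ≤ f (x j) + ε / 2 := by gcongr; exact hmax j hqK
    _ < f z + ε := by linarith

end HausdorffTruncation

section InnerProduct

variable {F ι : Type*} [NormedAddCommGroup F] [InnerProductSpace ℝ F]

lemma norm_le_of_isMaxOn_inner {C K : Set F} {u x q : F} {c : ℝ} (hc : 0 < c)
    (hcone : ∀ y ∈ C, ⟪u, y⟫_ℝ ≤ -(c * ‖y‖)) (hxC : x ∈ C) (hmax : IsMaxOn (inner ℝ u) K x)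
    (hq : q ∈ K) : ‖x‖ ≤ ‖u‖ * ‖q‖ / c := by
  have hxq : ⟪u, q⟫_ℝ ≤ ⟪u, x⟫_ℝ := hmax hq
  have hq_ge : -(‖u‖ * ‖q‖) ≤ ⟪u, q⟫_ℝ := neg_le_of_abs_le (abs_real_inner_le_norm u q)
  rw [le_div_iff₀ hc]
  linarith [hcone x hxC, mul_comm c ‖x‖]

theorem tendsto_of_isMaxOn_inner_of_tendsto_hausdorffDist [ProperSpace F] {l : Filter ι}
    {K : ι → Set F} {K0 C : Set F} {t0 c : ℝ} {u x0 : F} {x : ι → F}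
    (hconv : ∀ r ≥ t0,
      Tendsto (fun j => hausdorffDist (K j ∩ closedBall 0 r) (K0 ∩ closedBall 0 r)) l (𝓝 0))
    (hne : ∀ r ≥ t0, ∀ᶠ j in l, (K j ∩ closedBall 0 r).Nonempty) (hK0 : IsClosed K0)
    (hc : 0 < c) (hcone : ∀ y ∈ C, ⟪u, y⟫_ℝ ≤ -(c * ‖y‖))
    (hxK : ∀ j, x j ∈ K j) (hxC : ∀ j, x j ∈ C) (hmax : ∀ j, IsMaxOn (inner ℝ u) (K j) (x j))
    (hx0 : x0 ∈ K0) (huniq : ∀ z ∈ K0, IsMaxOn (inner ℝ u) K0 z → z = x0) :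
    Tendsto x l (𝓝 x0) := by
  set R := ‖u‖ * (‖x0‖ + 1) / c
  set r := max t0 (max R ‖x0‖)
  have hr : r ≥ t0 := le_max_left _ _
  have hx0r : x0 ∈ K0 ∩ closedBall 0 r :=
    ⟨hx0, mem_closedBall_zero_iff.2 ((le_max_right _ _).trans (le_max_right _ _))⟩
  have hbound : ∀ᶠ j in l, ‖x j‖ ≤ R := by
    filter_upwards [eventually_inter_nonempty_of_mem_nhds (hconv r hr) (hne r hr) hx0r
      (ball_mem_nhds x0 one_pos)] with j ⟨q, hqK, hq⟩
    have hq_le : ‖q‖ ≤ ‖x0‖ + 1 := by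
      linarith [norm_le_norm_add_norm_sub' q x0, mem_ball_iff_norm.1 hq]
    calc ‖x j‖ ≤ ‖u‖ * ‖q‖ / c := norm_le_of_isMaxOn_inner hc hcone (hxC j) (hmax j) hqK
      _ ≤ ‖u‖ * (‖x0‖ + 1) / c := by gcongr
  refine (isCompact_closedBall (0 : F) R).tendsto_nhds_of_unique_mapClusterPt
    (hbound.mono fun j hj => mem_closedBall_zero_iff.2 hj) fun z _ hz => huniq z ?_ ?_
  · refine mem_of_mapClusterPt_of_tendsto_hausdorffDist (hconv r hr) hK0 ⟨x0, hx0r⟩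
      (hbound.mono fun j hj => ⟨hxK j, mem_closedBall_zero_iff.2 ?_⟩) hz
    exact hj.trans ((le_max_left _ _).trans (le_max_right _ _))
  · exact isMaxOn_of_mapClusterPt_of_tendsto_hausdorffDist hconv hne
      (continuous_const.inner continuous_id) hmax hz

lemma tendsto_of_tendsto_smul_of_norm_eq_one {l : Filter ι} {v : ι → F} {v0 : F}
    {s : ι → ℝ} {s0 : ℝ} (hv : ∀ j, ‖v j‖ = 1) (hv0 : ‖v0‖ = 1) (hs : ∀ j, 0 < s j) (hs0 : 0 < s0)
    (h : Tendsto (fun j => s j • v j) l (𝓝 (s0 • v0))) : Tendsto v l (𝓝 v0) := by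
  have hdir : ∀ {w : F} {a : ℝ}, ‖w‖ = 1 → 0 < a → ‖a • w‖⁻¹ • (a • w) = w := fun hw ha => by
    rw [norm_smul, hw, mul_one, Real.norm_of_nonneg ha.le, smul_smul, inv_mul_cancel₀ ha.ne',
      one_smul]
  have hlim := (h.norm.inv₀ (by simp [norm_smul, hv0, hs0.ne'])).smul h
  rw [hdir hv0 hs0] at hlim
  exact hlim.congr fun j => hdir (hv j) (hs j)

end InnerProduct

lemma exists_inner_le_neg_mul_norm_of_mem_interior_dualCone {n : ℕ} {C : Set (E n)} {u : E n}
    (hu : u ∈ interior (dualCone C)) : ∃ c > 0, ∀ y ∈ C, ⟪u, y⟫_ℝ ≤ -(c * ‖y‖) := by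
  obtain ⟨ε, hε, hball⟩ := Metric.mem_nhds_iff.1 (mem_interior_iff_mem_nhds.1 hu)
  refine ⟨ε / 2, half_pos hε, fun y hy => ?_⟩
  rcases eq_or_ne y 0 with rfl | hy0
  · simp
  set w := (ε / 2 / ‖y‖) • y
  have hw : ‖w‖ = ε / 2 := by
    rw [norm_smul, Real.norm_of_nonneg (by positivity), div_mul_cancel₀ _ (norm_ne_zero_iff.2 hy0)]
  have hwy : ⟪w, y⟫_ℝ = ε / 2 * ‖y‖ := by
    rw [real_inner_smul_left, real_inner_self_eq_norm_sq]
    field_simp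
  have hmem : u + w ∈ dualCone C :=
    hball (by rw [mem_ball, dist_eq_norm, add_sub_cancel_left, hw]; linarith)
  have := hmem y hy
  rw [inner_add_left, hwy] at this
  linarith

lemma isNormalAt_iff_isMaxOn {n : ℕ} {K : Set (E n)} {u x : E n} :
    IsNormalAt K u x ↔ x ∈ K ∧ IsMaxOn (inner ℝ u) K x := by
  simp only [IsNormalAt, isMaxOn_iff, inner_sub_right, sub_nonpos]

lemma radial_pos_of_smul_mem {n : ℕ} {K : Set (E n)} {v : E n} (h0 : (0 : E n) ∉ K)
    (hv : radial K v • v ∈ K) : 0 < radial K v := by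
  refine (Real.sInf_nonneg fun r hr => hr.1.le).lt_of_ne fun h => h0 ?_
  rwa [radial, ← h, zero_smul] at hv

theorem stmt19_general {n : ℕ} (C : Set (E n))
    (K : ℕ → Set (E n)) (K0 : Set (E n))
    (hK : ∀ j, IsPseudoCone C (K j)) (hK0 : IsPseudoCone C K0)
    (hdist : ∀ j, Metric.infDist 0 (K j) = 1)
    (t0 : ℝ)
    (hconv : ∀ t ≥ t0, Filter.Tendsto
      (fun j => Metric.hausdorffDist (K j ∩ Metric.closedBall 0 t) (K0 ∩ Metric.closedBall 0 t))
      Filter.atTop (nhds 0))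
    (u : E n) (hu : u ∈ Omega (dualCone C))
    (v : ℕ → E n) (v0 : E n) (hv : ∀ j, v j ∈ Omega C) (hv0 : v0 ∈ Omega C)
    (hnormal : ∀ j, IsNormalAt (K j) u (radial (K j) (v j) • v j))
    (hnormal0 : IsNormalAt K0 u (radial K0 v0 • v0))
    (huniq0 : ∃! x, IsNormalAt K0 u x) :
    Filter.Tendsto v Filter.atTop (nhds v0) := by
  obtain ⟨c, hc, hcone⟩ := exists_inner_le_neg_mul_norm_of_mem_interior_dualCone hu.2
  -- A truncation that is empty would make `hausdorffDist` take the junk value `0`.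
  have hne : ∀ r ≥ max t0 2, ∀ᶠ j in atTop, (K j ∩ closedBall 0 r).Nonempty := fun r hr =>
    Eventually.of_forall fun j => inter_closedBall_nonempty_of_infDist_lt (hK j).1
      (by linarith [hdist j, le_max_right t0 2])
  have hx : Tendsto (fun j => radial (K j) (v j) • v j) atTop (𝓝 (radial K0 v0 • v0)) :=
    tendsto_of_isMaxOn_inner_of_tendsto_hausdorffDist
      (fun r hr => hconv r ((le_max_left _ _).trans hr)) hne hK0.2.1 hc hcone
      (fun j => (hnormal j).1) (fun j => (hK j).2.2.2.1 (hnormal j).1)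
      (fun j => (isNormalAt_iff_isMaxOn.1 (hnormal j)).2) hnormal0.1
      (fun z hz hmax => huniq0.unique (isNormalAt_iff_isMaxOn.2 ⟨hz, hmax⟩) hnormal0)
  exact tendsto_of_tendsto_smul_of_norm_eq_one (fun j => (hv j).1) hv0.1
    (fun j => radial_pos_of_smul_mem (hK j).2.2.2.2.1 (hnormal j).1)
    (radial_pos_of_smul_mem hK0.2.2.2.2.1 hnormal0.1) hx

theorem stmt19 {n : ℕ} (C : Set (E n)) (hC : IsGoodCone C)
    (K : ℕ → Set (E n)) (K0 : Set (E n))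
    (hK : ∀ j, IsPseudoCone C (K j)) (hK0 : IsPseudoCone C K0)
    (hdist : ∀ j, Metric.infDist 0 (K j) = 1) (hdist0 : Metric.infDist 0 K0 = 1)
    (t0 : ℝ) (ht0 : 0 < t0)
    (hconv : ∀ t ≥ t0, Filter.Tendsto
      (fun j => Metric.hausdorffDist (K j ∩ Metric.closedBall 0 t) (K0 ∩ Metric.closedBall 0 t))
      Filter.atTop (nhds 0))
    (u : E n) (hu : u ∈ Omega (dualCone C))
    (v : ℕ → E n) (v0 : E n) (hv : ∀ j, v j ∈ Omega C) (hv0 : v0 ∈ Omega C)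
    (hnormal : ∀ j, IsNormalAt (K j) u (radial (K j) (v j) • v j))
    (hnormal0 : IsNormalAt K0 u (radial K0 v0 • v0))
    (huniq : ∀ j, ∃! x, IsNormalAt (K j) u x)
    (huniq0 : ∃! x, IsNormalAt K0 u x) :
    Filter.Tendsto v Filter.atTop (nhds v0) :=
  stmt19_general C K K0 hK hK0 hdist t0 hconv u hu v v0 hv hv0 hnormal hnormal0 huniq0
end
end
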